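/- arXiv:2510.18402 — 2 statements merged into one kernel-verified Lean document; each statement's English description precedes it below -/
import Mathlib

section
/- Suppose the MPC setup assumptions hold (continuity of f, closedness of Z with compact input projection, the path/steady-state assumptions on p, g, g_p, the cost assumptions on ℓ and V_o, and the controllability assumption). If the finite-horizon optimal control problem is feasible at the initial state x_0, then under the MPC closed loop x_{k+1} = f(x_k, u*_{0|k}) the problem remains feasible for all k > 0, the closed-loop trajectory satisfies (x_k, u_k) ∈ Z and B(x_k) ∩ O_i = ∅ for all k ≥ 0 and all i ∈ {1,…,N_o}, and the state x_k converges to the target state x_T = g_p(1) as k → ∞. -/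
open Filter Topology

noncomputable section

/-- A class-`K` function: continuous on `[0,∞)`, strictly increasing there, vanishing at `0`. -/
def IsClassK (α : ℝ → ℝ) : Prop :=
  ContinuousOn α (Set.Ici 0) ∧ StrictMonoOn α (Set.Ici 0) ∧ α 0 = 0

/-- A class-`K∞` function: class `K` and unbounded. -/
def IsClassKInfty (α : ℝ → ℝ) : Prop :=
  IsClassK α ∧ Filter.Tendsto α Filter.atTop Filter.atTop

/-- The data of the output-tracking MPC problem for motion planning:
dynamics `f`, constraint set `Z`, `No` obstacles `O i`, footprint `B`,
reference path `p`, output map `g`, steady-state path `gp` with steady inputs `us`,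
stage cost `sc` (called `ℓ` in the paper), offset cost `Vo`, and horizon `N`. -/
structure MPC (n m q : ℕ) where
  f : EuclideanSpace ℝ (Fin n) → EuclideanSpace ℝ (Fin m) → EuclideanSpace ℝ (Fin n)
  Z : Set (EuclideanSpace ℝ (Fin n) × EuclideanSpace ℝ (Fin m))
  No : ℕ
  O : ℕ → Set (EuclideanSpace ℝ (Fin 2))
  B : EuclideanSpace ℝ (Fin n) → Set (EuclideanSpace ℝ (Fin 2))
  p : ℝ → EuclideanSpace ℝ (Fin q)
  g : EuclideanSpace ℝ (Fin n) → EuclideanSpace ℝ (Fin q)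
  gp : ℝ → EuclideanSpace ℝ (Fin n)
  us : ℝ → EuclideanSpace ℝ (Fin m)
  sc : EuclideanSpace ℝ (Fin n) → EuclideanSpace ℝ (Fin m) → ℝ
  Vo : ℝ → ℝ
  N : ℕ

namespace MPC

variable {n m q : ℕ} (M : MPC n m q)

/-- A tuple `(u_{0:N}, x_{0:N}, s)` is feasible at state `x` for problem (7):
`x_{0|k} = x`, the dynamics hold along the prediction, the terminal pair is a steady
state whose output lies on the path at `s ∈ [0,1]`, the state/input constraints hold, and
the predicted states `l = 1,…,N` are collision-free. -/
def Feasible (x : EuclideanSpace ℝ (Fin n)) (u : ℕ → EuclideanSpace ℝ (Fin m))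
    (xs : ℕ → EuclideanSpace ℝ (Fin n)) (s : ℝ) : Prop :=
  s ∈ Set.Icc (0 : ℝ) 1 ∧
  xs 0 = x ∧
  (∀ l < M.N, xs (l + 1) = M.f (xs l) (u l)) ∧
  xs M.N = M.f (xs M.N) (u M.N) ∧
  M.g (xs M.N) = M.p s ∧
  (∀ l ≤ M.N, (xs l, u l) ∈ M.Z) ∧
  (∀ l, 1 ≤ l → l ≤ M.N → ∀ i < M.No, M.B (xs l) ∩ M.O i = ∅)

/-- The MPC cost `J_N(u, x, s) = Σ_{l=0}^{N-1} ℓ(x_l − x_N, u_l − u_N) + V_o(1 − s)`. -/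
def Cost (u : ℕ → EuclideanSpace ℝ (Fin m)) (xs : ℕ → EuclideanSpace ℝ (Fin n)) (s : ℝ) : ℝ :=
  (∑ l ∈ Finset.range M.N, M.sc (xs l - xs M.N) (u l - u M.N)) + M.Vo (1 - s)

/-- `(u, xs, s)` is an optimal feasible tuple at `x`; its cost is the optimal value `V_N(x)`. -/
def IsOptimal (x : EuclideanSpace ℝ (Fin n)) (u : ℕ → EuclideanSpace ℝ (Fin m))
    (xs : ℕ → EuclideanSpace ℝ (Fin n)) (s : ℝ) : Prop :=
  M.Feasible x u xs s ∧
  ∀ u' xs' s', M.Feasible x u' xs' s' → M.Cost u xs s ≤ M.Cost u' xs' s'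

/-- Assumption 1 items 2–4 on the path and steady states: `g ∘ gp = p` on `[0,1]`, each
`(gp s, us s)` is a steady state in the interior of `Z` whose footprint avoids all
obstacles, and it is the unique steady state with output `p s`. -/
def SteadyStatePath : Prop :=
  (∀ s ∈ Set.Icc (0 : ℝ) 1, M.g (M.gp s) = M.p s) ∧
  (∀ s ∈ Set.Icc (0 : ℝ) 1, M.f (M.gp s) (M.us s) = M.gp s) ∧
  (∀ s ∈ Set.Icc (0 : ℝ) 1, (M.gp s, M.us s) ∈ interior M.Z) ∧
  (∀ s ∈ Set.Icc (0 : ℝ) 1, ∀ i < M.No, M.B (M.gp s) ∩ M.O i = ∅) ∧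
  (∀ s ∈ Set.Icc (0 : ℝ) 1, ∀ xss uss, M.f xss uss = xss → M.g xss = M.p s →
      xss = M.gp s ∧ uss = M.us s)

/-- Assumption 3 (controllability): from any state `ε`-close to a steady state on the path
there is a feasible tuple whose tracking cost is bounded by `b‖x − gp s‖^σ`. -/
def Controllable (b ε σ : ℝ) : Prop :=
  ∀ s ∈ Set.Icc (0 : ℝ) 1, ∀ x : EuclideanSpace ℝ (Fin n), ‖x - M.gp s‖ ≤ ε →
    ∃ u xs, M.Feasible x u xs s ∧
      (∑ l ∈ Finset.range M.N, M.sc (xs l - M.gp s) (u l - M.us s)) ≤ b * ‖x - M.gp s‖ ^ σ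

end MPC

/-!
The optimal cost `V k := V_N(x k)` is a Lyapunov function. Shifting the optimal tuple at `x k`
(dropping its first entry and repeating the terminal steady state) gives a feasible tuple at
`x (k+1)`, so `V (k+1) + αℓ ‖x k - x_s*(k)‖ ≤ V k`. Hence `V` decreases to a limit `L` and the
tracking error `‖x k - gp (s* k)‖` tends to `0`. Near the path, controllability towards the
steady state a fraction `t` further along the path, together with convexity of `Vo`, gives
`t V k ≤ C t ^ σ`; since `σ > 1` this forces `L = 0`. Then `Vo (1 - s* k) → 0`, so `s* k → 1`
and `x k → gp 1` by the Lipschitz continuity of `gp`.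
-/

open Finset

theorem exists_seq_of_forall_exists {α : Type*} {P : α → Prop} {R : α → α → Prop}
    (h : ∀ a, P a → ∃ b, P b ∧ R a b) {a₀ : α} (h₀ : P a₀) :
    ∃ a : ℕ → α, a 0 = a₀ ∧ ∀ k, P (a k) ∧ R (a k) (a (k + 1)) := by
  choose next hnext using h
  let step : {a // P a} → {a // P a} := fun a => ⟨next a a.2, (hnext a a.2).1⟩
  refine ⟨fun k => (step^[k] ⟨a₀, h₀⟩).1, rfl, fun k => ⟨(step^[k] _).2, ?_⟩⟩
  dsimp only
  rw [Function.iterate_succ_apply']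
  exact (hnext _ _).2

theorem ConvexOn.map_smul_le {E : Type*} [AddCommGroup E] [Module ℝ E] {s : Set E} {f : E → ℝ}
    (hf : ConvexOn ℝ s f) (h0 : (0 : E) ∈ s) (hf0 : f 0 = 0) {x : E} (hx : x ∈ s) {t : ℝ}
    (ht₀ : 0 ≤ t) (ht₁ : t ≤ 1) : f (t • x) ≤ t * f x := by
  simpa [hf0] using hf.2 hx h0 ht₀ (sub_nonneg.2 ht₁) (add_sub_cancel t 1)

theorem nonpos_of_forall_mul_le_mul_rpow {L C σ t₀ : ℝ} (hσ : 1 < σ) (ht₀ : 0 < t₀)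
    (h : ∀ t ∈ Set.Ioc 0 t₀, t * L ≤ C * t ^ σ) : L ≤ 0 := by
  have hlim : Tendsto (fun t : ℝ => C * t ^ (σ - 1)) (𝓝[>] 0) (𝓝 0) := by
    have : Tendsto (fun t : ℝ => C * t ^ (σ - 1)) (𝓝[>] 0) (𝓝 (C * 0 ^ (σ - 1))) :=
      ((Real.continuousAt_rpow_const 0 (σ - 1) (Or.inr (by linarith))).tendsto.const_mul
        C).mono_left nhdsWithin_le_nhds
    rwa [Real.zero_rpow (by linarith), mul_zero] at this
  refine ge_of_tendsto hlim (eventually_of_mem (Ioc_mem_nhdsGT ht₀) fun t ht => ?_)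
  have hσt : C * t ^ σ = C * t ^ (σ - 1) * t := by
    rw [Real.rpow_sub_one ht.1.ne', mul_assoc, div_mul_cancel₀ _ ht.1.ne']
  exact le_of_mul_le_mul_right (by linarith [h t ht]) ht.1

theorem IsClassK.pos {α : ℝ → ℝ} (hα : IsClassK α) {t : ℝ} (ht : 0 < t) : 0 < α t := by
  simpa [hα.2.2] using hα.2.1 Set.self_mem_Ici ht.le ht

theorem IsClassK.nonneg {α : ℝ → ℝ} (hα : IsClassK α) {t : ℝ} (ht : 0 ≤ t) : 0 ≤ α t := by
  rcases ht.eq_or_lt with rfl | ht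
  · exact hα.2.2.ge
  · exact (hα.pos ht).le

theorem IsClassK.tendsto_zero_of_le {ι : Type*} {l : Filter ι} {α : ℝ → ℝ} (hα : IsClassK α)
    {e a : ι → ℝ} (he : ∀ i, 0 ≤ e i) (hle : ∀ i, α (e i) ≤ a i) (ha : Tendsto a l (𝓝 0)) :
    Tendsto e l (𝓝 0) := by
  rw [Metric.tendsto_nhds]
  intro δ hδ
  filter_upwards [ha.eventually (gt_mem_nhds (hα.pos hδ))] with i hi
  rw [Real.dist_0_eq_abs, abs_of_nonneg (he i)]
  by_contra! hδe
  exact (hle i).not_gt (hi.trans_le (hα.2.1.monotoneOn hδ.le (hδ.le.trans hδe) hδe))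

theorem IsClassK.tendsto_zero_of_descent {α : ℝ → ℝ} (hα : IsClassK α) {V e : ℕ → ℝ} {L : ℝ}
    (hV : Tendsto V atTop (𝓝 L)) (he : ∀ k, 0 ≤ e k) (hdesc : ∀ k, V (k + 1) + α (e k) ≤ V k) :
    Tendsto e atTop (𝓝 0) :=
  hα.tendsto_zero_of_le he (a := fun k => V k - V (k + 1)) (fun k => by linarith [hdesc k])
    (by simpa using hV.sub (hV.comp (tendsto_add_atTop_nat 1)))

theorem tendsto_of_tendsto_norm_sub_comp {E : Type*} [SeminormedAddCommGroup E] {γ : ℝ → E}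
    {K t₀ : ℝ} {x : ℕ → E} {s : ℕ → ℝ} (hγ : ∀ k, ‖γ (s k) - γ t₀‖ ≤ K * |s k - t₀|)
    (hx : Tendsto (fun k => ‖x k - γ (s k)‖) atTop (𝓝 0)) (hs : Tendsto s atTop (𝓝 t₀)) :
    Tendsto x atTop (𝓝 (γ t₀)) := by
  rw [tendsto_iff_norm_sub_tendsto_zero]
  refine squeeze_zero (fun _ => norm_nonneg _)
    (fun k => (norm_sub_le_norm_sub_add_norm_sub _ (γ (s k)) _).trans (add_le_add le_rfl (hγ k))) ?_
  have hs' : Tendsto (fun k => |s k - t₀|) atTop (𝓝 0) := by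
    simpa using (hs.sub_const t₀).abs
  simpa using hx.add (hs'.const_mul K)

namespace MPC

variable {n m q : ℕ} (M : MPC n m q) {x : EuclideanSpace ℝ (Fin n)}
  {u : ℕ → EuclideanSpace ℝ (Fin m)} {xs : ℕ → EuclideanSpace ℝ (Fin n)} {s : ℝ}

def shift {α : Type*} (v : ℕ → α) : ℕ → α := fun l => v (min (l + 1) M.N)

variable {M}

theorem Feasible.xs_min_succ (h : M.Feasible x u xs s) (l : ℕ) :
    xs (min (l + 1) M.N) = M.f (xs (min l M.N)) (u (min l M.N)) := by
  rcases lt_or_ge l M.N with hl | hl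
  · rw [min_eq_left hl, min_eq_left hl.le]
    exact h.2.2.1 l hl
  · rw [min_eq_right hl, min_eq_right (by omega)]
    exact h.2.2.2.1

theorem Feasible.f_eq_xs_min_one (h : M.Feasible x u xs s) : M.f x (u 0) = xs (min 1 M.N) := by
  simpa [h.2.1] using (h.xs_min_succ 0).symm

theorem Feasible.shift (h : M.Feasible x u xs s) :
    M.Feasible (M.f x (u 0)) (M.shift u) (M.shift xs) s := by
  have hN : min (M.N + 1) M.N = M.N := by omega
  refine ⟨h.1, h.f_eq_xs_min_one.symm, fun l _ => h.xs_min_succ (l + 1), ?_, ?_,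
    fun l _ => h.2.2.2.2.2.1 _ (min_le_right _ _),
    fun l hl₁ hlN => h.2.2.2.2.2.2 _ (by omega) (min_le_right _ _)⟩
  · simpa only [MPC.shift, hN] using h.2.2.2.1
  · simpa only [MPC.shift, hN] using h.2.2.2.2.1

theorem Feasible.mem_Z (h : M.Feasible x u xs s) : (x, u 0) ∈ M.Z := by
  simpa [h.2.1] using h.2.2.2.2.2.1 0 (Nat.zero_le _)

theorem Feasible.collisionFree_f (h : M.Feasible x u xs s)
    (hB : ∀ i < M.No, M.B x ∩ M.O i = ∅) : ∀ i < M.No, M.B (M.f x (u 0)) ∩ M.O i = ∅ := by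
  rw [h.f_eq_xs_min_one]
  rcases Nat.eq_zero_or_pos M.N with hN | hN
  · simpa [hN, h.2.1] using hB
  · simpa [Nat.min_eq_left hN] using h.2.2.2.2.2.2 1 le_rfl hN

theorem Feasible.terminal_eq (hpath : M.SteadyStatePath) (h : M.Feasible x u xs s) :
    xs M.N = M.gp s ∧ u M.N = M.us s :=
  hpath.2.2.2.2 s h.1 _ _ h.2.2.2.1.symm h.2.2.2.2.1

theorem cost_shift_add (hsc0 : M.sc 0 0 = 0) (u : ℕ → EuclideanSpace ℝ (Fin m))
    (xs : ℕ → EuclideanSpace ℝ (Fin n)) (s : ℝ) :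
    M.Cost (M.shift u) (M.shift xs) s + M.sc (xs 0 - xs M.N) (u 0 - u M.N) = M.Cost u xs s := by
  have hN : min (M.N + 1) M.N = M.N := by omega
  have hsum : ∑ l ∈ range M.N, M.sc (M.shift xs l - M.shift xs M.N) (M.shift u l - M.shift u M.N)
      = ∑ l ∈ range M.N, M.sc (xs (l + 1) - xs M.N) (u (l + 1) - u M.N) :=
    sum_congr rfl fun l hl => by
      simp only [MPC.shift, hN, min_eq_left (Nat.succ_le_of_lt (mem_range.1 hl))]
  have hsplit := sum_range_succ' (fun l => M.sc (xs l - xs M.N) (u l - u M.N)) M.N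
  rw [sum_range_succ, sub_self, sub_self, hsc0, add_zero] at hsplit
  rw [Cost, Cost, hsum, hsplit]
  ring

theorem Vo_le_cost (hscNonneg : ∀ x u, 0 ≤ M.sc x u) (u : ℕ → EuclideanSpace ℝ (Fin m))
    (xs : ℕ → EuclideanSpace ℝ (Fin n)) (s : ℝ) : M.Vo (1 - s) ≤ M.Cost u xs s :=
  le_add_of_nonneg_left (sum_nonneg fun _ _ => hscNonneg _ _)

theorem IsOptimal.cost_succ_add_le (hpath : M.SteadyStatePath) (hsc0 : M.sc 0 0 = 0)
    {αℓ : ℝ → ℝ} (hsclb : ∀ x u, αℓ ‖x‖ ≤ M.sc x u) (h : M.IsOptimal x u xs s)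
    {u' : ℕ → EuclideanSpace ℝ (Fin m)} {xs' : ℕ → EuclideanSpace ℝ (Fin n)} {s' : ℝ}
    (h' : M.IsOptimal (M.f x (u 0)) u' xs' s') :
    M.Cost u' xs' s' + αℓ ‖x - M.gp s‖ ≤ M.Cost u xs s := by
  have hshift := cost_shift_add hsc0 u xs s
  rw [h.1.2.1, (h.1.terminal_eq hpath).1] at hshift
  linarith [h'.2 _ _ _ h.1.shift, hsclb (x - M.gp s) (u 0 - u M.N)]

theorem IsOptimal.cost_le_of_controllable (hpath : M.SteadyStatePath) {b ε σ : ℝ}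
    (hctrl : M.Controllable b ε σ) (h : M.IsOptimal x u xs s) {s' : ℝ}
    (hs' : s' ∈ Set.Icc (0 : ℝ) 1) (hx : ‖x - M.gp s'‖ ≤ ε) :
    M.Cost u xs s ≤ b * ‖x - M.gp s'‖ ^ σ + M.Vo (1 - s') := by
  obtain ⟨u', xs', hfeas, hsum⟩ := hctrl s' hs' x hx
  obtain ⟨hxN, huN⟩ := hfeas.terminal_eq hpath
  calc M.Cost u xs s ≤ M.Cost u' xs' s' := h.2 u' xs' s' hfeas
    _ ≤ b * ‖x - M.gp s'‖ ^ σ + M.Vo (1 - s') := by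
        rw [Cost, hxN, huN]
        exact add_le_add_left hsum _

/-- The comparison steady state is `gp (s + t (1 - s))`: it lies within `2 Lgp t` of `x`, and
convexity of `Vo` saves the factor `1 - t` on the offset cost. -/
theorem IsOptimal.mul_cost_le (hpath : M.SteadyStatePath) (hscNonneg : ∀ x u, 0 ≤ M.sc x u)
    (hVoConv : ConvexOn ℝ (Set.Icc 0 1) M.Vo) (hVo0 : M.Vo 0 = 0) {Lgp : ℝ} (hLgp : 0 ≤ Lgp)
    (hgpLip : ∀ s ∈ Set.Icc (0 : ℝ) 1, ∀ t ∈ Set.Icc (0 : ℝ) 1,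
      ‖M.gp s - M.gp t‖ ≤ Lgp * |s - t|)
    {b ε σ : ℝ} (hb : 0 ≤ b) (hσ : 0 ≤ σ) (hctrl : M.Controllable b ε σ)
    (h : M.IsOptimal x u xs s) {t : ℝ} (ht₀ : 0 < t) (ht₁ : t ≤ 1)
    (hxt : ‖x - M.gp s‖ ≤ Lgp * t) (htε : 2 * Lgp * t ≤ ε) :
    t * M.Cost u xs s ≤ b * (2 * Lgp) ^ σ * t ^ σ := by
  obtain ⟨hs₀, hs₁⟩ := h.1.1
  have hs' : s + t * (1 - s) ∈ Set.Icc (0 : ℝ) 1 := ⟨by nlinarith, by nlinarith⟩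
  have hdist : ‖x - M.gp (s + t * (1 - s))‖ ≤ 2 * Lgp * t := by
    have hlip := hgpLip s h.1.1 _ hs'
    rw [show s - (s + t * (1 - s)) = -(t * (1 - s)) by ring, abs_neg,
      abs_of_nonneg (by nlinarith)] at hlip
    calc ‖x - M.gp (s + t * (1 - s))‖
        ≤ ‖x - M.gp s‖ + ‖M.gp s - M.gp (s + t * (1 - s))‖ :=
          norm_sub_le_norm_sub_add_norm_sub _ _ _
      _ ≤ Lgp * t + Lgp * t :=
          add_le_add hxt (hlip.trans (mul_le_mul_of_nonneg_left (by nlinarith) hLgp))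
      _ = 2 * Lgp * t := by ring
  have hVo : M.Vo (1 - (s + t * (1 - s))) ≤ (1 - t) * M.Cost u xs s := by
    calc M.Vo (1 - (s + t * (1 - s))) = M.Vo ((1 - t) • (1 - s)) := by
          rw [smul_eq_mul]; ring_nf
      _ ≤ (1 - t) * M.Vo (1 - s) :=
          hVoConv.map_smul_le ⟨le_rfl, zero_le_one⟩ hVo0 ⟨by linarith, by linarith⟩
            (by linarith) (by linarith)
      _ ≤ (1 - t) * M.Cost u xs s :=
          mul_le_mul_of_nonneg_left (Vo_le_cost hscNonneg u xs s) (by linarith)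
  have hcost := h.cost_le_of_controllable hpath hctrl hs' (hdist.trans htε)
  have hpow : b * ‖x - M.gp (s + t * (1 - s))‖ ^ σ ≤ b * (2 * Lgp) ^ σ * t ^ σ := by
    rw [mul_assoc, ← Real.mul_rpow (by positivity) ht₀.le]
    exact mul_le_mul_of_nonneg_left (Real.rpow_le_rpow (norm_nonneg _) hdist hσ) hb
  linarith

theorem exists_closedLoop {x₀ : EuclideanSpace ℝ (Fin n)}
    (hattain : ∀ x, (∃ u xs s, M.Feasible x u xs s) → ∃ u xs s, M.IsOptimal x u xs s)
    (hfeas₀ : ∃ u xs s, M.Feasible x₀ u xs s) :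
    ∃ (x : ℕ → EuclideanSpace ℝ (Fin n)) (uu : ℕ → ℕ → EuclideanSpace ℝ (Fin m))
      (xx : ℕ → ℕ → EuclideanSpace ℝ (Fin n)) (ss : ℕ → ℝ),
      x 0 = x₀ ∧ (∀ k, M.IsOptimal (x k) (uu k) (xx k) (ss k)) ∧
      ∀ k, x (k + 1) = M.f (x k) (uu k 0) := by
  obtain ⟨u₀, xs₀, s₀, hopt₀⟩ := hattain x₀ hfeas₀
  obtain ⟨t, ht₀, ht⟩ := exists_seq_of_forall_exists
    (P := fun t : EuclideanSpace ℝ (Fin n) × (ℕ → EuclideanSpace ℝ (Fin m)) ×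
      (ℕ → EuclideanSpace ℝ (Fin n)) × ℝ => M.IsOptimal t.1 t.2.1 t.2.2.1 t.2.2.2)
    (R := fun t t' => t'.1 = M.f t.1 (t.2.1 0))
    (fun t ht => by
      obtain ⟨u, xs, s, h⟩ := hattain _ ⟨_, _, _, ht.1.shift⟩
      exact ⟨(_, u, xs, s), h, rfl⟩)
    (a₀ := (x₀, u₀, xs₀, s₀)) hopt₀
  exact ⟨fun k => (t k).1, fun k => (t k).2.1, fun k => (t k).2.2.1, fun k => (t k).2.2.2,
    congrArg Prod.fst ht₀, fun k => (ht k).1, fun k => (ht k).2⟩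

theorem tendsto_closedLoop (hpath : M.SteadyStatePath) {Lgp : ℝ} (hLgp : 0 < Lgp)
    (hgpLip : ∀ s ∈ Set.Icc (0 : ℝ) 1, ∀ t ∈ Set.Icc (0 : ℝ) 1,
      ‖M.gp s - M.gp t‖ ≤ Lgp * |s - t|)
    (hscNonneg : ∀ x u, 0 ≤ M.sc x u) (hsc0 : M.sc 0 0 = 0)
    (hVoConv : ConvexOn ℝ (Set.Icc 0 1) M.Vo) (hVo0 : M.Vo 0 = 0)
    (hVoNonneg : ∀ t ∈ Set.Icc (0 : ℝ) 1, 0 ≤ M.Vo t)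
    {αℓ αo : ℝ → ℝ} (hαℓ : IsClassK αℓ) (hαo : IsClassK αo)
    (hsclb : ∀ x u, αℓ ‖x‖ ≤ M.sc x u)
    (hVolb : ∀ s ∈ Set.Icc (0 : ℝ) 1, αo |1 - s| ≤ M.Vo (1 - s))
    {b ε σ : ℝ} (hb : 0 < b) (hε : 0 < ε) (hσ : 1 < σ) (hctrl : M.Controllable b ε σ)
    {x : ℕ → EuclideanSpace ℝ (Fin n)} {uu : ℕ → ℕ → EuclideanSpace ℝ (Fin m)}
    {xx : ℕ → ℕ → EuclideanSpace ℝ (Fin n)} {ss : ℕ → ℝ}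
    (hopt : ∀ k, M.IsOptimal (x k) (uu k) (xx k) (ss k))
    (hstep : ∀ k, x (k + 1) = M.f (x k) (uu k 0)) :
    Tendsto x atTop (𝓝 (M.gp 1)) := by
  set V : ℕ → ℝ := fun k => M.Cost (uu k) (xx k) (ss k)
  have hs : ∀ k, ss k ∈ Set.Icc (0 : ℝ) 1 := fun k => (hopt k).1.1
  have hVoV : ∀ k, M.Vo (1 - ss k) ≤ V k := fun k => Vo_le_cost hscNonneg _ _ _
  have hV : ∀ k, 0 ≤ V k := fun k =>
    (hVoNonneg _ ⟨by linarith [(hs k).2], by linarith [(hs k).1]⟩).trans (hVoV k)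
  have hdesc : ∀ k, V (k + 1) + αℓ ‖x k - M.gp (ss k)‖ ≤ V k := fun k =>
    (hopt k).cost_succ_add_le hpath hsc0 hsclb (hstep k ▸ hopt (k + 1))
  have hanti : Antitone V := antitone_nat_of_succ_le fun k => by
    linarith [hdesc k, hαℓ.nonneg (norm_nonneg (x k - M.gp (ss k)))]
  obtain ⟨L, hlim⟩ : ∃ L, Tendsto V atTop (𝓝 L) :=
    ⟨_, tendsto_atTop_ciInf hanti ⟨0, by rintro _ ⟨k, rfl⟩; exact hV k⟩⟩
  have herr := hαℓ.tendsto_zero_of_descent hlim (fun _ => norm_nonneg _) hdesc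
  -- Once `x k` is within `Lgp t` of the path, `t L ≤ t V k ≤ C t ^ σ`; as `σ > 1`, `L ≤ 0`.
  have hL : L = 0 := by
    refine le_antisymm (nonpos_of_forall_mul_le_mul_rpow (C := b * (2 * Lgp) ^ σ)
      (t₀ := min 1 (ε / (2 * Lgp))) hσ (lt_min one_pos (by positivity)) fun t ht => ?_)
      (ge_of_tendsto' hlim hV)
    obtain ⟨k, hk⟩ := (herr.eventually (gt_mem_nhds (mul_pos hLgp ht.1))).exists
    have htε : 2 * Lgp * t ≤ ε := by
      have := ht.2.trans (min_le_right _ _)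
      rw [le_div_iff₀ (by positivity)] at this
      linarith
    calc t * L ≤ t * V k := mul_le_mul_of_nonneg_left (hanti.le_of_tendsto hlim k) ht.1.le
      _ ≤ b * (2 * Lgp) ^ σ * t ^ σ := (hopt k).mul_cost_le hpath hscNonneg hVoConv hVo0
          hLgp.le hgpLip hb.le (by linarith) hctrl ht.1 (ht.2.trans (min_le_left _ _)) hk.le htε
  have hs1 : Tendsto (fun k => |1 - ss k|) atTop (𝓝 0) :=
    hαo.tendsto_zero_of_le (fun _ => abs_nonneg _) (fun k => (hVolb _ (hs k)).trans (hVoV k))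
      (hL ▸ hlim)
  refine tendsto_of_tendsto_norm_sub_comp (fun k => hgpLip _ (hs k) 1 ⟨zero_le_one, le_rfl⟩) herr ?_
  rw [tendsto_iff_dist_tendsto_zero]
  simpa [Real.dist_eq, abs_sub_comm] using hs1

end MPC

theorem mpc_recursive_feasibility_and_convergence_general
    {n m q : ℕ} (M : MPC n m q) (x0 : EuclideanSpace ℝ (Fin n))
    -- Assumption 1, items 2–4
    (hpath : M.SteadyStatePath)
    (Lgp : ℝ) (hLgp : 0 < Lgp)
    (hgpLip : ∀ s ∈ Set.Icc (0 : ℝ) 1, ∀ t ∈ Set.Icc (0 : ℝ) 1,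
      ‖M.gp s - M.gp t‖ ≤ Lgp * |s - t|)
    -- Assumption 2 (stage and offset cost)
    (hscNonneg : ∀ x u, 0 ≤ M.sc x u) (hsc0 : M.sc 0 0 = 0)
    (hVoConv : ConvexOn ℝ (Set.Icc 0 1) M.Vo)
    (hVo0 : M.Vo 0 = 0)
    (hVoNonneg : ∀ t ∈ Set.Icc (0 : ℝ) 1, 0 ≤ M.Vo t)
    (αℓ αo : ℝ → ℝ) (hαℓ : IsClassKInfty αℓ) (hαo : IsClassK αo)
    (hsclb : ∀ x u, αℓ ‖x‖ ≤ M.sc x u)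
    (hVolb : ∀ s ∈ Set.Icc (0 : ℝ) 1, αo |1 - s| ≤ M.Vo (1 - s))
    -- Assumption 3 (controllability)
    (b ε σ : ℝ) (hb : 0 < b) (hε : 0 < ε) (hσ : 1 < σ)
    (hctrl : M.Controllable b ε σ)
    -- the minimum of problem (7) is attained whenever the problem is feasible
    (hattain : ∀ x, (∃ u xs s, M.Feasible x u xs s) → ∃ u xs s, M.IsOptimal x u xs s)
    -- initial feasibility and collision-free initial state
    (hfeas0 : ∃ u xs s, M.Feasible x0 u xs s)
    (hB0 : ∀ i < M.No, M.B x0 ∩ M.O i = ∅) :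
    ∃ (x : ℕ → EuclideanSpace ℝ (Fin n))
      (uu : ℕ → ℕ → EuclideanSpace ℝ (Fin m))
      (xx : ℕ → ℕ → EuclideanSpace ℝ (Fin n)) (ss : ℕ → ℝ),
      x 0 = x0 ∧
      (∀ k, M.IsOptimal (x k) (uu k) (xx k) (ss k)) ∧
      (∀ k, x (k + 1) = M.f (x k) (uu k 0)) ∧
      (∀ k, (x k, uu k 0) ∈ M.Z) ∧
      (∀ k, ∀ i < M.No, M.B (x k) ∩ M.O i = ∅) ∧
      Filter.Tendsto x Filter.atTop (nhds (M.gp 1)) := by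
  obtain ⟨x, uu, xx, ss, hx0, hopt, hstep⟩ := M.exists_closedLoop hattain hfeas0
  refine ⟨x, uu, xx, ss, hx0, hopt, hstep, fun k => (hopt k).1.mem_Z, fun k => ?_,
    M.tendsto_closedLoop hpath hLgp hgpLip hscNonneg hsc0 hVoConv hVo0 hVoNonneg hαℓ.1 hαo hsclb
      hVolb hb hε hσ hctrl hopt hstep⟩
  induction k with
  | zero => exact hx0 ▸ hB0
  | succ k ih => exact hstep k ▸ (hopt k).1.collisionFree_f ih

/-- **Theorem 1.** Under Assumptions 1–3 (continuity of `f`, closed `Z` with compact input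
projection, the path/steady-state assumptions, the cost assumptions, controllability, and
attainment of the minimum), if problem (7) is feasible at the initial state `x0` (which is
collision-free), then there is a closed-loop realization `x (k+1) = f (x k) (u*_{0|k})`
driven by optimal feasible tuples for all `k` (so the problem remains feasible for all
`k > 0`), the closed loop satisfies the state/input and collision-avoidance constraints
for all `k ≥ 0`, and `x k` converges to the target `x_T = gp 1`. -/
theorem mpc_recursive_feasibility_and_convergence
    {n m q : ℕ} (M : MPC n m q) (x0 : EuclideanSpace ℝ (Fin n))
    -- Assumption 1, item 1
    (hf : Continuous (Function.uncurry M.f))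
    (hZclosed : IsClosed M.Z) (hZne : M.Z.Nonempty)
    (hZinputCompact : IsCompact (Prod.snd '' M.Z))
    -- Assumption 1, items 2–4
    (hpCont : ContinuousOn M.p (Set.Icc 0 1))
    (hp0 : M.p 0 = M.g x0)
    (hpath : M.SteadyStatePath)
    (Lgp : ℝ) (hLgp : 0 < Lgp)
    (hgpLip : ∀ s ∈ Set.Icc (0 : ℝ) 1, ∀ t ∈ Set.Icc (0 : ℝ) 1,
      ‖M.gp s - M.gp t‖ ≤ Lgp * |s - t|)
    -- Assumption 2 (stage and offset cost)
    (hscCont : Continuous (Function.uncurry M.sc))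
    (hscNonneg : ∀ x u, 0 ≤ M.sc x u) (hsc0 : M.sc 0 0 = 0)
    (hVoCont : ContinuousOn M.Vo (Set.Icc 0 1))
    (hVoConv : ConvexOn ℝ (Set.Icc 0 1) M.Vo)
    (hVo0 : M.Vo 0 = 0)
    (hVoNonneg : ∀ t ∈ Set.Icc (0 : ℝ) 1, 0 ≤ M.Vo t)
    (αℓ αo : ℝ → ℝ) (hαℓ : IsClassKInfty αℓ) (hαo : IsClassK αo)
    (hsclb : ∀ x u, αℓ ‖x‖ ≤ M.sc x u)
    (hVolb : ∀ s ∈ Set.Icc (0 : ℝ) 1, αo |1 - s| ≤ M.Vo (1 - s))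
    -- Assumption 3 (controllability)
    (b ε σ : ℝ) (hb : 0 < b) (hε : 0 < ε) (hσ : 1 < σ)
    (hctrl : M.Controllable b ε σ)
    -- the minimum of problem (7) is attained whenever the problem is feasible
    (hattain : ∀ x, (∃ u xs s, M.Feasible x u xs s) → ∃ u xs s, M.IsOptimal x u xs s)
    -- initial feasibility and collision-free initial state
    (hfeas0 : ∃ u xs s, M.Feasible x0 u xs s)
    (hB0 : ∀ i < M.No, M.B x0 ∩ M.O i = ∅) :
    ∃ (x : ℕ → EuclideanSpace ℝ (Fin n))
      (uu : ℕ → ℕ → EuclideanSpace ℝ (Fin m))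
      (xx : ℕ → ℕ → EuclideanSpace ℝ (Fin n)) (ss : ℕ → ℝ),
      x 0 = x0 ∧
      (∀ k, M.IsOptimal (x k) (uu k) (xx k) (ss k)) ∧
      (∀ k, x (k + 1) = M.f (x k) (uu k 0)) ∧
      (∀ k, (x k, uu k 0) ∈ M.Z) ∧
      (∀ k, ∀ i < M.No, M.B (x k) ∩ M.O i = ∅) ∧
      Filter.Tendsto x Filter.atTop (nhds (M.gp 1)) :=
  mpc_recursive_feasibility_and_convergence_general M x0 hpath Lgp hLgp hgpLip hscNonneg hsc0
    hVoConv hVo0 hVoNonneg αℓ αo hαℓ hαo hsclb hVolb b ε σ hb hε hσ hctrl hattain hfeas0 hB0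
end
end

section
/- (Lower bound on the optimal value function.) Suppose the class-K∞ lower bound α_ℓ(‖x‖) ≤ ℓ(x,u) and the class-K lower bound α_o(|1−s|) ≤ V_o(1−s) hold, and that g_p is Lipschitz with constant L_{g_p}. Then there exists a class-K∞ function α (one may take α(r) = min{α_ℓ(r), α̂_o(L_{g_p}^{-1} r)} for a class-K∞ extension α̂_o of α_o) such that for every state x at which the optimization problem is feasible, V_N(x) ≥ (1/2) α(‖x − x_T‖), where x_T = g_p(1). -/
/-!
Let `(u, xs, s)` be feasible at `x` and `r = ‖x - gp 1‖`. Uniqueness of steady states on the path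
forces the terminal state to be `gp s`, so the first stage cost is at least `α_ℓ ‖x - gp s‖`, and
the offset cost is at least `α_o (1 - s)`. By the Lipschitz bound `r ≤ ‖x - gp s‖ + L (1 - s)`, so
`‖x - gp s‖ ≥ r / 2` or `1 - s ≥ r / (2 L)`; either way the cost is at least
`min (α_ℓ (r / 2)) (α̂_o (r / (2 L)))`, where `α̂_o` extends `α_o` linearly beyond `1`.
-/

open Filter Topology

noncomputable section

open Set

namespace IsClassK

variable {α β : ℝ → ℝ}

lemma monotoneOn (hα : IsClassK α) : MonotoneOn α (Ici 0) :=
  hα.2.1.monotoneOn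

lemma nonneg_s4 (hα : IsClassK α) {t : ℝ} (ht : 0 ≤ t) : 0 ≤ α t :=
  hα.2.2 ▸ hα.monotoneOn self_mem_Ici ht ht

lemma comp_div (hα : IsClassK α) {c : ℝ} (hc : 0 < c) : IsClassK fun r => α (r / c) := by
  have hmaps : MapsTo (fun r : ℝ => r / c) (Ici 0) (Ici 0) := fun r hr =>
    div_nonneg hr hc.le
  refine ⟨hα.1.comp (continuous_id.div_const c).continuousOn hmaps, ?_, by simpa using hα.2.2⟩
  exact fun r hr t ht hrt => hα.2.1 (hmaps hr) (hmaps ht) (div_lt_div_of_pos_right hrt hc)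

lemma min (hα : IsClassK α) (hβ : IsClassK β) : IsClassK fun r => min (α r) (β r) :=
  ⟨hα.1.inf hβ.1, fun _ hr _ ht hrt => min_lt_min (hα.2.1 hr ht hrt) (hβ.2.1 hr ht hrt),
    by simp [hα.2.2, hβ.2.2]⟩

end IsClassK

namespace IsClassKInfty

variable {α β : ℝ → ℝ}

lemma comp_div (hα : IsClassKInfty α) {c : ℝ} (hc : 0 < c) :
    IsClassKInfty fun r => α (r / c) :=
  ⟨hα.1.comp_div hc, hα.2.comp (tendsto_id.atTop_div_const hc)⟩

lemma min (hα : IsClassKInfty α) (hβ : IsClassKInfty β) :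
    IsClassKInfty fun r => min (α r) (β r) :=
  ⟨hα.1.min hβ.1, tendsto_inf_atTop atTop hα.2 hβ.2⟩

end IsClassKInfty

def classKInftyExtension (α : ℝ → ℝ) (t : ℝ) : ℝ :=
  α (min t 1) + max (t - 1) 0

lemma classKInftyExtension_of_le_one {α : ℝ → ℝ} {t : ℝ} (ht : t ≤ 1) :
    classKInftyExtension α t = α t := by
  simp [classKInftyExtension, ht]

lemma isClassKInfty_classKInftyExtension {α : ℝ → ℝ} (hα : IsClassK α) :
    IsClassKInfty (classKInftyExtension α) := by
  have hmin : MapsTo (fun t : ℝ => min t 1) (Ici 0) (Ici 0) := fun t ht =>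
    mem_Ici.2 (le_min ht zero_le_one)
  refine ⟨⟨?_, ?_, by simp [classKInftyExtension, hα.2.2]⟩, ?_⟩
  · exact (hα.1.comp (continuous_id.min continuous_const).continuousOn hmin).add
      (by fun_prop)
  · intro s hs t ht hst
    rcases le_or_gt t 1 with ht1 | ht1
    · rw [classKInftyExtension_of_le_one ht1, classKInftyExtension_of_le_one (hst.le.trans ht1)]
      exact hα.2.1 hs ht hst
    · refine add_lt_add_of_le_of_lt ?_ ?_
      · exact hα.monotoneOn (hmin hs) (hmin ht) (min_le_min_right 1 hst.le)
      · rw [max_eq_left (by linarith : (0 : ℝ) ≤ t - 1)]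
        exact max_lt (by linarith) (by linarith)
  · refine tendsto_atTop_mono' atTop ?_ (tendsto_atTop_add_const_right _ (-1) tendsto_id)
    filter_upwards [eventually_ge_atTop (0 : ℝ)] with t ht
    have := hα.nonneg_s4 (hmin ht)
    have := le_max_left (t - 1) 0
    simp only [classKInftyExtension, id]
    linarith

/-- If `r ≤ a + L t`, then `r / 2 ≤ a` or `r / (2 L) ≤ t`. -/
lemma min_le_max_of_le_add {f g : ℝ → ℝ} (hf : MonotoneOn f (Ici 0))
    (hg : MonotoneOn g (Ici 0)) {L a t r : ℝ} (hL : 0 < L) (ha : 0 ≤ a) (ht : 0 ≤ t)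
    (hr : 0 ≤ r) (hrat : r ≤ a + L * t) :
    min (f (r / 2)) (g (r / (2 * L))) ≤ max (f a) (g t) := by
  rcases le_or_gt (r / 2) a with hra | hra
  · exact (min_le_left _ _).trans <|
      (hf (div_nonneg hr zero_le_two) ha hra).trans (le_max_left _ _)
  · have hrt : r / (2 * L) ≤ t := by
      rw [div_le_iff₀ (by positivity)]
      linarith
    exact (min_le_right _ _).trans <|
      (hg (div_nonneg hr (by positivity)) ht hrt).trans (le_max_right _ _)

namespace MPC

variable {n m q : ℕ} {M : MPC n m q} {x : EuclideanSpace ℝ (Fin n)}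
  {u : ℕ → EuclideanSpace ℝ (Fin m)} {xs : ℕ → EuclideanSpace ℝ (Fin n)} {s : ℝ}

lemma Feasible.terminal_eq_gp (hpath : M.SteadyStatePath) (hF : M.Feasible x u xs s) :
    xs M.N = M.gp s :=
  (hpath.2.2.2.2 s hF.1 (xs M.N) (u M.N) hF.2.2.2.1.symm hF.2.2.2.2.1).1

lemma Feasible.le_stageCost (hpath : M.SteadyStatePath) (hF : M.Feasible x u xs s)
    {α : ℝ → ℝ} (hα : IsClassK α) (hsc : ∀ x u, α ‖x‖ ≤ M.sc x u) :
    α ‖x - M.gp s‖ ≤ ∑ l ∈ Finset.range M.N, M.sc (xs l - xs M.N) (u l - u M.N) := by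
  rw [← hF.2.1, ← hF.terminal_eq_gp hpath]
  rcases Nat.eq_zero_or_pos M.N with hN | hN
  · simp [hN, hα.2.2]
  · exact (hsc _ _).trans <| Finset.single_le_sum
      (f := fun l => M.sc (xs l - xs M.N) (u l - u M.N))
      (fun _ _ => (hα.nonneg_s4 (norm_nonneg _)).trans (hsc _ _)) (Finset.mem_range.2 hN)

lemma Feasible.max_le_cost (hpath : M.SteadyStatePath) (hF : M.Feasible x u xs s)
    {αℓ αo : ℝ → ℝ} (hαℓ : IsClassK αℓ) (hαo : IsClassK αo)
    (hsclb : ∀ x u, αℓ ‖x‖ ≤ M.sc x u)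
    (hVolb : ∀ s ∈ Icc (0 : ℝ) 1, αo |1 - s| ≤ M.Vo (1 - s)) :
    max (αℓ ‖x - M.gp s‖) (αo (1 - s)) ≤ M.Cost u xs s := by
  have hs := hF.1
  have hstage := hF.le_stageCost hpath hαℓ hsclb
  have hoffset : αo (1 - s) ≤ M.Vo (1 - s) := by
    simpa [abs_of_nonneg (sub_nonneg.2 hs.2)] using hVolb s hs
  exact (max_le_max hstage hoffset).trans <| max_le_add_of_nonneg
    ((hαℓ.nonneg_s4 (norm_nonneg _)).trans hstage)
    ((hαo.nonneg_s4 (sub_nonneg.2 hs.2)).trans hoffset)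

end MPC

theorem mpc_value_function_lower_bound_general
    {n m q : ℕ} (M : MPC n m q)
    (hpath : M.SteadyStatePath)
    (Lgp : ℝ) (hLgp : 0 < Lgp)
    (hgpLip : ∀ s ∈ Set.Icc (0 : ℝ) 1, ∀ t ∈ Set.Icc (0 : ℝ) 1,
      ‖M.gp s - M.gp t‖ ≤ Lgp * |s - t|)
    (αℓ αo : ℝ → ℝ) (hαℓ : IsClassKInfty αℓ) (hαo : IsClassK αo)
    (hsclb : ∀ x u, αℓ ‖x‖ ≤ M.sc x u)
    (hVolb : ∀ s ∈ Set.Icc (0 : ℝ) 1, αo |1 - s| ≤ M.Vo (1 - s)) :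
    ∃ α : ℝ → ℝ, IsClassKInfty α ∧
      ∀ (x : EuclideanSpace ℝ (Fin n)) (u : ℕ → EuclideanSpace ℝ (Fin m))
        (xs : ℕ → EuclideanSpace ℝ (Fin n)) (s : ℝ),
        M.Feasible x u xs s →
          (1 / 2) * α ‖x - M.gp 1‖ ≤ M.Cost u xs s := by
  have hβ := isClassKInfty_classKInftyExtension hαo
  have hα := (hαℓ.comp_div two_pos).min (hβ.comp_div (mul_pos two_pos hLgp))
  refine ⟨_, hα, fun x u xs s hF => ?_⟩
  have hs := hF.1
  have hr : ‖x - M.gp 1‖ ≤ ‖x - M.gp s‖ + Lgp * (1 - s) := by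
    have hLip := hgpLip s hs 1 (right_mem_Icc.2 zero_le_one)
    rw [abs_sub_comm, abs_of_nonneg (sub_nonneg.2 hs.2)] at hLip
    linarith [norm_sub_le_norm_sub_add_norm_sub x (M.gp s) (M.gp 1)]
  have hmin := min_le_max_of_le_add hαℓ.1.monotoneOn hβ.1.monotoneOn hLgp (norm_nonneg _)
    (sub_nonneg.2 hs.2) (norm_nonneg _) hr
  rw [classKInftyExtension_of_le_one (sub_le_self 1 hs.1)] at hmin
  have hcost := hF.max_le_cost hpath hαℓ.1 hαo hsclb hVolb
  linarith [hα.1.nonneg_s4 (norm_nonneg (x - M.gp 1))]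

/-- **Lower bound on the optimal value function.** Under the class-`K∞` bound
`α_ℓ(‖x‖) ≤ ℓ(x,u)`, the class-`K` bound `α_o(|1−s|) ≤ V_o(1−s)`, Lipschitz continuity of
`g_p`, and the steady-state path assumptions, there is a class-`K∞` function `α` such that
every tuple feasible at `x` has cost at least `(1/2) α (‖x − x_T‖)`; in particular
`V_N x ≥ (1/2) α (‖x − x_T‖)` with `x_T = gp 1`. -/
theorem mpc_value_function_lower_bound
    {n m q : ℕ} (M : MPC n m q)
    (hpath : M.SteadyStatePath)
    (Lgp : ℝ) (hLgp : 0 < Lgp)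
    (hgpLip : ∀ s ∈ Set.Icc (0 : ℝ) 1, ∀ t ∈ Set.Icc (0 : ℝ) 1,
      ‖M.gp s - M.gp t‖ ≤ Lgp * |s - t|)
    (hscNonneg : ∀ x u, 0 ≤ M.sc x u)
    (hVoNonneg : ∀ t ∈ Set.Icc (0 : ℝ) 1, 0 ≤ M.Vo t)
    (αℓ αo : ℝ → ℝ) (hαℓ : IsClassKInfty αℓ) (hαo : IsClassK αo)
    (hsclb : ∀ x u, αℓ ‖x‖ ≤ M.sc x u)
    (hVolb : ∀ s ∈ Set.Icc (0 : ℝ) 1, αo |1 - s| ≤ M.Vo (1 - s)) :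
    ∃ α : ℝ → ℝ, IsClassKInfty α ∧
      ∀ (x : EuclideanSpace ℝ (Fin n)) (u : ℕ → EuclideanSpace ℝ (Fin m))
        (xs : ℕ → EuclideanSpace ℝ (Fin n)) (s : ℝ),
        M.Feasible x u xs s →
          (1 / 2) * α ‖x - M.gp 1‖ ≤ M.Cost u xs s :=
  mpc_value_function_lower_bound_general M hpath Lgp hLgp hgpLip αℓ αo hαℓ hαo hsclb hVolb
end
end
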